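/- Let d ≤ k and let X ∈ ℝ^{d×k} have full rank d. Let X̃ ∈ ℝ^{d×k} be such that X X̃ᵀ is symmetric positive semidefinite, and set ΔX = X̃ − X. Then 0 ≤ ‖ΔX‖_F² − √2 · σ_d(X) · ‖ΔX‖_F + ‖X̃ᵀX̃ − XᵀX‖_F. -/

import Mathlib

open Matrix

/-- Euclidean norm of a vector. -/
noncomputable def euclNorm {n : ℕ} (v : Fin n → ℝ) : ℝ :=
  Real.sqrt (∑ i, (v i) ^ 2)

/-- Frobenius norm of a matrix. -/
noncomputable def frobNorm {m n : ℕ} (A : Matrix (Fin m) (Fin n) ℝ) : ℝ :=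
  Real.sqrt (∑ i, ∑ j, (A i j) ^ 2)

/-- The smallest (d-th) singular value of `X ∈ ℝ^{d×k}` (for `d ≤ k`),
characterized variationally as `min_{‖u‖=1} ‖Xᵀ u‖`. -/
noncomputable def sigmaMin {d k : ℕ} (X : Matrix (Fin d) (Fin k) ℝ) : ℝ :=
  sInf {r | ∃ u : Fin d → ℝ, euclNorm u = 1 ∧ r = euclNorm (Matrix.vecMul u X)}

/-- The Procrustes distance: `min` over orthogonal `Q` of `‖X − Q X̃‖_F`. -/
noncomputable def rho {d k : ℕ} (X Y : Matrix (Fin d) (Fin k) ℝ) : ℝ :=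
  sInf {r | ∃ Q : Matrix (Fin d) (Fin d) ℝ, Qᵀ * Q = 1 ∧ r = frobNorm (X - Q * Y)}

/-!
Write `Δ = X̃ - X` and `A = Xᵀ Δ`, so that `X̃ᵀ X̃ - Xᵀ X = (A + Aᵀ) + Δᵀ Δ`. The hypothesis makes
`Δ Xᵀ = X̃ Xᵀ - X Xᵀ` symmetric, hence `tr (A²) = tr ((Δ Xᵀ)²) = ‖Δ Xᵀ‖² ≥ 0` and
`‖A + Aᵀ‖² = 2 ‖A‖² + 2 tr (A²) ≥ 2 ‖A‖² ≥ 2 σ_d(X)² ‖Δ‖²`, the last step row by row on `Δᵀ X`.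
Since `‖Δᵀ Δ‖ ≤ ‖Δ‖²`, the triangle inequality gives `√2 σ_d(X) ‖Δ‖ ≤ ‖X̃ᵀ X̃ - Xᵀ X‖ + ‖Δ‖²`.
-/

attribute [local instance] Matrix.frobeniusNormedAddCommGroup

open WithLp

section Frobenius

variable {m n : Type*} [Fintype m] [Fintype n]

lemma frobNorm_eq_norm {p q : ℕ} (A : Matrix (Fin p) (Fin q) ℝ) : frobNorm A = ‖A‖ := by
  rw [frobenius_norm_def, frobNorm, Real.sqrt_eq_rpow]
  simp [Real.norm_eq_abs, sq_abs]

lemma euclNorm_eq_norm {p : ℕ} (v : Fin p → ℝ) : euclNorm v = ‖toLp 2 v‖ := by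
  simp [euclNorm, EuclideanSpace.norm_eq]

lemma Matrix.frobenius_norm_sq_eq_sum_row (A : Matrix m n ℝ) :
    ‖A‖ ^ 2 = ∑ i, ‖toLp 2 (A i)‖ ^ 2 :=
  PiLp.norm_sq_eq_of_L2 _ (toLp 2 fun i => toLp 2 (A i))

lemma Matrix.frobenius_norm_sq_eq_trace (A : Matrix m n ℝ) : ‖A‖ ^ 2 = trace (Aᵀ * A) := by
  rw [frobenius_norm_sq_eq_sum_row]
  simp_rw [EuclideanSpace.norm_sq_eq, Real.norm_eq_abs, sq_abs]
  simp only [trace, diag, mul_apply, transpose_apply, sq]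
  exact Finset.sum_comm

lemma Matrix.frobenius_norm_add_transpose_sq (A : Matrix n n ℝ) :
    ‖A + Aᵀ‖ ^ 2 = 2 * ‖A‖ ^ 2 + 2 * trace (A * A) := by
  simp only [frobenius_norm_sq_eq_trace, transpose_add, transpose_transpose, add_mul, mul_add,
    trace_add, ← transpose_mul, trace_transpose]
  rw [trace_mul_comm A Aᵀ]
  ring

lemma Matrix.IsSymm.trace_mul_self_nonneg {S : Matrix n n ℝ} (hS : S.IsSymm) :
    0 ≤ trace (S * S) := by
  nth_rw 1 [← hS.eq]
  rw [← frobenius_norm_sq_eq_trace]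
  positivity

lemma Matrix.sqrt_two_mul_norm_le_norm_add_transpose {A : Matrix n n ℝ}
    (hA : 0 ≤ trace (A * A)) : √2 * ‖A‖ ≤ ‖A + Aᵀ‖ := by
  rw [← sq_le_sq₀ (by positivity) (by positivity), mul_pow, Real.sq_sqrt zero_le_two,
    frobenius_norm_add_transpose_sq]
  linarith

end Frobenius

section SigmaMin

variable {d k : ℕ}

lemma sigmaMin_nonneg (X : Matrix (Fin d) (Fin k) ℝ) : 0 ≤ sigmaMin X :=
  Real.sInf_nonneg fun _ ⟨_, _, hr⟩ => hr ▸ Real.sqrt_nonneg _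

lemma sigmaMin_mul_norm_le (X : Matrix (Fin d) (Fin k) ℝ) (v : Fin d → ℝ) :
    sigmaMin X * ‖toLp 2 v‖ ≤ ‖toLp 2 (v ᵥ* X)‖ := by
  rcases eq_or_ne v 0 with rfl | hv
  · simp
  have hpos : 0 < ‖toLp 2 v‖ := by simpa using hv
  have hmem : ‖toLp 2 ((‖toLp 2 v‖⁻¹ • v) ᵥ* X)‖ ∈
      {r | ∃ u : Fin d → ℝ, euclNorm u = 1 ∧ r = euclNorm (u ᵥ* X)} :=
    ⟨‖toLp 2 v‖⁻¹ • v, by simp [euclNorm_eq_norm, norm_smul, hpos.ne'], by rw [euclNorm_eq_norm]⟩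
  have hle : sigmaMin X ≤ _ := csInf_le ⟨0, fun _ ⟨_, _, hr⟩ => hr ▸ Real.sqrt_nonneg _⟩ hmem
  rw [smul_vecMul, WithLp.toLp_smul, norm_smul, norm_inv, norm_norm] at hle
  calc sigmaMin X * ‖toLp 2 v‖ ≤ ‖toLp 2 v‖⁻¹ * ‖toLp 2 (v ᵥ* X)‖ * ‖toLp 2 v‖ := by gcongr
    _ = _ := by field_simp

lemma sigmaMin_mul_norm_le_norm_mul {m : Type*} [Fintype m] (X : Matrix (Fin d) (Fin k) ℝ)
    (B : Matrix m (Fin d) ℝ) : sigmaMin X * ‖B‖ ≤ ‖B * X‖ := by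
  have hσ := sigmaMin_nonneg X
  rw [← sq_le_sq₀ (by positivity) (norm_nonneg _), mul_pow, frobenius_norm_sq_eq_sum_row,
    frobenius_norm_sq_eq_sum_row, Finset.mul_sum]
  gcongr with i
  rw [← mul_pow]
  exact pow_le_pow_left₀ (by positivity) (sigmaMin_mul_norm_le X (B i)) 2

end SigmaMin

lemma Matrix.transpose_mul_self_sub_transpose_mul_self {m n R : Type*} [Fintype m] [CommRing R]
    (X Y : Matrix m n R) :
    Yᵀ * Y - Xᵀ * X = (Xᵀ * (Y - X) + (Xᵀ * (Y - X))ᵀ) + (Y - X)ᵀ * (Y - X) := by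
  simp only [transpose_mul, transpose_sub, transpose_transpose, Matrix.mul_sub, Matrix.sub_mul]
  abel

lemma Matrix.isSymm_sub_mul_transpose {m n R : Type*} [Fintype n] [CommRing R]
    {X Y : Matrix m n R} (h : (X * Yᵀ).IsSymm) : ((Y - X) * Xᵀ).IsSymm := by
  have hYX : (Y * Xᵀ).IsSymm := by simpa only [transpose_mul, transpose_transpose] using h.transpose
  have hXX : (X * Xᵀ).IsSymm := by
    rw [IsSymm, transpose_mul, transpose_transpose]
  rw [Matrix.sub_mul]
  exact hYX.sub hXX

theorem stmt9_general {d k : ℕ}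
    (X : Matrix (Fin d) (Fin k) ℝ)
    (Xt : Matrix (Fin d) (Fin k) ℝ)
    (hpsd : (X * Xtᵀ).PosSemidef) :
    0 ≤ frobNorm (Xt - X) ^ 2 - Real.sqrt 2 * sigmaMin X * frobNorm (Xt - X)
        + frobNorm (Xtᵀ * Xt - Xᵀ * X) := by
  simp only [frobNorm_eq_norm]
  set Δ := Xt - X
  set A := Xᵀ * Δ with hA
  have htrace : 0 ≤ trace (A * A) := by
    have hS := isSymm_sub_mul_transpose (isHermitian_iff_isSymm.1 hpsd.isHermitian)
    rw [hA, Matrix.mul_assoc, trace_mul_comm]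
    simpa only [Matrix.mul_assoc] using hS.trace_mul_self_nonneg
  have hlower : √2 * sigmaMin X * ‖Δ‖ ≤ ‖A + Aᵀ‖ := calc
    √2 * sigmaMin X * ‖Δ‖ = √2 * (sigmaMin X * ‖Δᵀ‖) := by rw [frobenius_norm_transpose]; ring
    _ ≤ √2 * ‖Δᵀ * X‖ := by gcongr; exact sigmaMin_mul_norm_le_norm_mul X Δᵀ
    _ = √2 * ‖A‖ := by rw [← frobenius_norm_transpose, transpose_mul, transpose_transpose]
    _ ≤ ‖A + Aᵀ‖ := sqrt_two_mul_norm_le_norm_add_transpose htrace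
  have hupper : ‖A + Aᵀ‖ ≤ ‖Xtᵀ * Xt - Xᵀ * X‖ + ‖Δ‖ ^ 2 := calc
    ‖A + Aᵀ‖ ≤ ‖A + Aᵀ + Δᵀ * Δ‖ + ‖Δᵀ * Δ‖ := norm_le_add_norm_add _ _
    _ ≤ ‖Xtᵀ * Xt - Xᵀ * X‖ + ‖Δ‖ ^ 2 := by
      rw [transpose_mul_self_sub_transpose_mul_self X Xt]
      gcongr
      simpa only [frobenius_norm_transpose, sq] using frobenius_norm_mul Δᵀ Δ
  linarith

theorem stmt9 {d k : ℕ} (hdk : d ≤ k)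
    (X : Matrix (Fin d) (Fin k) ℝ) (hX : X.rank = d)
    (Xt : Matrix (Fin d) (Fin k) ℝ)
    (hpsd : (X * Xtᵀ).PosSemidef) :
    0 ≤ frobNorm (Xt - X) ^ 2 - Real.sqrt 2 * sigmaMin X * frobNorm (Xt - X)
        + frobNorm (Xtᵀ * Xt - Xᵀ * X) :=
  stmt9_general X Xt hpsd
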